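/- The function φ(M) = e^M/(e^M − 1) − 1/M is strictly increasing on (0, ∞), maps (0, ∞) into (1/2, 1), and satisfies lim_{M→0⁺} φ(M) = 1/2 and lim_{M→∞} φ(M) = 1; hence for every r ∈ (1/2, 1) there is a unique M > 0 with φ(M) = r. -/

import Mathlib

open Filter Topology

noncomputable def chiuPhi (M : ℝ) : ℝ := Real.exp M / (Real.exp M - 1) - 1 / M

lemma exp_sub_one_pos' {x : ℝ} (hx : 0 < x) : 0 < Real.exp x - 1 := by
  have : Real.exp 0 < Real.exp x := Real.exp_lt_exp.mpr hx
  simpa using this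

lemma key_ineq {x : ℝ} (hx : 0 < x) : x * Real.exp (x/2) < Real.exp x - 1 := by
  have h := Real.self_lt_sinh_iff.mpr (show 0 < x/2 by linarith)
  have hs : Real.sinh (x/2) = (Real.exp (x/2) - Real.exp (-(x/2)))/2 := Real.sinh_eq _
  have he : Real.exp (x/2) * Real.exp (x/2) = Real.exp x := by
    rw [← Real.exp_add]; ring_nf
  have hi : Real.exp (x/2) * Real.exp (-(x/2)) = 1 := by
    rw [← Real.exp_add]; simp
  have hp : (0:ℝ) < Real.exp (x/2) := Real.exp_pos _
  nlinarith [mul_lt_mul_of_pos_right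
    (show x < Real.exp (x/2) - Real.exp (-(x/2)) by linarith) hp]

lemma chiu_hasDerivAt {x : ℝ} (hx : 0 < x) :
    HasDerivAt chiuPhi ((x^2)⁻¹ - Real.exp x / (Real.exp x - 1)^2) x := by
  have hne : Real.exp x - 1 ≠ 0 := ne_of_gt (exp_sub_one_pos' hx)
  have h1 : HasDerivAt (fun M => Real.exp M / (Real.exp M - 1))
      ((Real.exp x * (Real.exp x - 1) - Real.exp x * Real.exp x) / (Real.exp x - 1)^2) x :=
    (Real.hasDerivAt_exp x).div ((Real.hasDerivAt_exp x).sub_const 1) hne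
  have h2 : HasDerivAt (fun M : ℝ => 1 / M) (-(x^2)⁻¹) x := by
    simpa [one_div] using hasDerivAt_inv (ne_of_gt hx)
  have := h1.sub h2
  refine this.congr_deriv ?_
  field_simp
  ring

lemma chiu_deriv_pos {x : ℝ} (hx : 0 < x) :
    0 < (x^2)⁻¹ - Real.exp x / (Real.exp x - 1)^2 := by
  have hk := key_ineq hx
  have hp : (0:ℝ) < Real.exp (x/2) := Real.exp_pos _
  have he : Real.exp (x/2) * Real.exp (x/2) = Real.exp x := by
    rw [← Real.exp_add]; ring_nf
  have hpos : 0 < x * Real.exp (x/2) := mul_pos hx hp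
  have hsq : Real.exp x * x^2 < (Real.exp x - 1)^2 := by
    nlinarith [mul_self_lt_mul_self hpos.le hk]
  have h1 : (0:ℝ) < x^2 := by positivity
  have h2 : (0:ℝ) < (Real.exp x - 1)^2 := pow_pos (exp_sub_one_pos' hx) 2
  have : Real.exp x / (Real.exp x - 1)^2 < 1 / x^2 := by
    rw [div_lt_div_iff₀ h2 h1]
    linarith
  rw [one_div] at this
  linarith

lemma chiu_strictMono : StrictMonoOn chiuPhi (Set.Ioi 0) := by
  apply strictMonoOn_of_deriv_pos (convex_Ioi 0)
  · intro x hx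
    exact (chiu_hasDerivAt hx).differentiableAt.continuousAt.continuousWithinAt
  · intro x hx
    rw [interior_Ioi] at hx
    rw [(chiu_hasDerivAt hx).deriv]
    exact chiu_deriv_pos hx

lemma tendsto_aux : Tendsto (fun M : ℝ => (Real.exp M - 1 - M) / M^2) (𝓝[>] 0) (𝓝 (1/2)) := by
  have hb : ∀ M : ℝ, 0 < M → M ≤ 1 → |(Real.exp M - 1 - M)/M^2 - 1/2| ≤ (2/9) * M := by
    intro M hM hM1
    have habs : |M| ≤ 1 := by rw [abs_of_pos hM]; exact hM1
    have h := Real.exp_bound habs (show 0 < 3 by norm_num)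
    have hsum : ∑ i ∈ Finset.range 3, M ^ i / (Nat.factorial i : ℝ) = 1 + M + M^2/2 := by
      simp [Finset.sum_range_succ, Nat.factorial]
    rw [hsum, abs_of_pos hM] at h
    norm_num [Nat.factorial] at h
    have hM2 : (0:ℝ) < M^2 := by positivity
    have heq : (Real.exp M - 1 - M)/M^2 - 1/2 = (Real.exp M - (1 + M + M^2/2))/M^2 := by
      field_simp; ring
    rw [heq, abs_div, abs_of_pos hM2, div_le_iff₀ hM2]
    nlinarith [h]
  have h0 : Tendsto (fun M : ℝ => (2/9) * M) (𝓝[>] 0) (𝓝 0) := by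
    have : Tendsto (fun M : ℝ => (2/9) * M) (𝓝 0) (𝓝 ((2/9) * 0)) :=
      (continuous_const.mul continuous_id).tendsto 0
    simpa using this.mono_left nhdsWithin_le_nhds
  have hev : ∀ᶠ M in 𝓝[>] (0:ℝ), ‖(Real.exp M - 1 - M)/M^2 - 1/2‖ ≤ (2/9) * M := by
    filter_upwards [Ioc_mem_nhdsGT_of_mem (by norm_num : (0:ℝ) ∈ Set.Ico 0 1)] with M hM
    exact hb M hM.1 hM.2
  have := squeeze_zero_norm' hev h0
  have h2 := this.add (tendsto_const_nhds (x := (1/2:ℝ)))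
  simpa using h2

lemma tendsto_aux2 : Tendsto (fun M : ℝ => (Real.exp M - 1) / M) (𝓝[>] 0) (𝓝 1) := by
  have hid : Tendsto (fun M : ℝ => M) (𝓝[>] 0) (𝓝 0) :=
    tendsto_id.mono_left nhdsWithin_le_nhds
  have h := (tendsto_aux.mul hid).add (tendsto_const_nhds (x := (1:ℝ)))
  have heq : ∀ᶠ M in 𝓝[>] (0:ℝ),
      (Real.exp M - 1 - M)/M^2 * M + 1 = (Real.exp M - 1)/M := by
    filter_upwards [self_mem_nhdsWithin] with M hM
    have : M ≠ 0 := ne_of_gt hM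
    field_simp
    ring
  have := h.congr' heq
  simpa using this

lemma chiu_tendsto_zero : Tendsto chiuPhi (𝓝[>] 0) (𝓝 (1/2)) := by
  have h := (tendsto_const_nhds (x := (1:ℝ))).sub (tendsto_aux.div tendsto_aux2 one_ne_zero)
  have heq : ∀ᶠ M in 𝓝[>] (0:ℝ),
      1 - ((Real.exp M - 1 - M)/M^2) / ((Real.exp M - 1)/M) = chiuPhi M := by
    filter_upwards [self_mem_nhdsWithin] with M hM
    have h1 : Real.exp M - 1 ≠ 0 := ne_of_gt (exp_sub_one_pos' hM)
    have h2 : M ≠ 0 := ne_of_gt hM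
    unfold chiuPhi
    field_simp
    ring
  have h2 := h.congr' heq
  have : (1:ℝ)/2 = 1 - (1/2)/1 := by norm_num
  rw [this]
  exact h2

lemma chiu_tendsto_atTop : Tendsto chiuPhi atTop (𝓝 1) := by
  have h1 : Tendsto (fun M : ℝ => Real.exp M - 1) atTop atTop :=
    tendsto_atTop_add_const_right atTop (-1) Real.tendsto_exp_atTop
  have h2 : Tendsto (fun M : ℝ => (Real.exp M - 1)⁻¹) atTop (𝓝 0) :=
    tendsto_inv_atTop_zero.comp h1
  have h3 : Tendsto (fun M : ℝ => M⁻¹) atTop (𝓝 0) := tendsto_inv_atTop_zero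
  have h := ((tendsto_const_nhds (x := (1:ℝ))).add h2).sub h3
  have heq : ∀ᶠ M in atTop, 1 + (Real.exp M - 1)⁻¹ - M⁻¹ = chiuPhi M := by
    filter_upwards [eventually_gt_atTop (0:ℝ)] with M hM
    have h1 : Real.exp M - 1 ≠ 0 := ne_of_gt (exp_sub_one_pos' hM)
    have h2 : M ≠ 0 := ne_of_gt hM
    unfold chiuPhi
    field_simp
    ring
  have := h.congr' heq
  simpa using this

lemma chiu_mem : ∀ M : ℝ, 0 < M → chiuPhi M ∈ Set.Ioo (1/2 : ℝ) 1 := by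
  intro M hM
  constructor
  · have h1 : chiuPhi (M/2) < chiuPhi M :=
      chiu_strictMono (by simpa using half_pos hM) (by simpa using hM) (by linarith)
    have h2 : (1:ℝ)/2 ≤ chiuPhi (M/2) := by
      apply le_of_tendsto chiu_tendsto_zero
      filter_upwards [Ioc_mem_nhdsGT_of_mem
        (show (0:ℝ) ∈ Set.Ico 0 (M/2) by constructor <;> [norm_num; linarith])] with t ht
      rcases eq_or_lt_of_le ht.2 with h | h
      · exact le_of_eq (by rw [h])
      · exact le_of_lt (chiu_strictMono (by simpa using ht.1)
          (by simpa using half_pos hM) h)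
    linarith
  · have h1 : chiuPhi M < chiuPhi (M + 1) :=
      chiu_strictMono (by simpa using hM) (by simp; linarith) (by linarith)
    have h2 : chiuPhi (M + 1) ≤ 1 := by
      apply ge_of_tendsto chiu_tendsto_atTop
      filter_upwards [eventually_ge_atTop (M + 1)] with t ht
      rcases eq_or_lt_of_le ht with h | h
      · exact le_of_eq (by rw [← h])
      · exact le_of_lt (chiu_strictMono (by simp; linarith)
          (by simp; linarith) h)
    linarith

theorem chiu_entropy_parameter :
    StrictMonoOn chiuPhi (Set.Ioi 0) ∧
    (∀ M : ℝ, 0 < M → chiuPhi M ∈ Set.Ioo (1/2 : ℝ) 1) ∧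
    Tendsto chiuPhi (𝓝[>] 0) (𝓝 (1/2)) ∧
    Tendsto chiuPhi atTop (𝓝 1) ∧
    (∀ r ∈ Set.Ioo (1/2 : ℝ) 1, ∃! M : ℝ, 0 < M ∧ chiuPhi M = r) := by
  refine ⟨chiu_strictMono, chiu_mem, chiu_tendsto_zero, chiu_tendsto_atTop, ?_⟩
  intro r hr
  obtain ⟨hr1, hr2⟩ := hr
  -- find a with chiuPhi a < r
  have ha : ∃ a : ℝ, 0 < a ∧ chiuPhi a < r := by
    have hev : ∀ᶠ t in 𝓝[>] (0:ℝ), chiuPhi t < r :=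
      chiu_tendsto_zero.eventually (Filter.Tendsto.eventually_lt_const hr1 tendsto_id)
    obtain ⟨a, ha1, ha2⟩ := (hev.and self_mem_nhdsWithin).exists
    exact ⟨a, ha2, ha1⟩
  have hb : ∃ b : ℝ, 0 < b ∧ r < chiuPhi b := by
    have hev : ∀ᶠ t in atTop, r < chiuPhi t :=
      chiu_tendsto_atTop.eventually (Filter.Tendsto.eventually_const_lt hr2 tendsto_id)
    obtain ⟨b, hb1, hb2⟩ := (hev.and (eventually_gt_atTop 0)).exists
    exact ⟨b, hb2, hb1⟩
  obtain ⟨a, ha0, har⟩ := ha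
  obtain ⟨b, hb0, hbr⟩ := hb
  have hab : a ≤ b := by
    by_contra h
    push_neg at h
    have := chiu_strictMono (by simpa using hb0) (by simpa using ha0) h
    linarith
  have hcont : ContinuousOn chiuPhi (Set.Icc a b) := by
    intro x hx
    have hx0 : 0 < x := lt_of_lt_of_le ha0 hx.1
    exact (chiu_hasDerivAt hx0).differentiableAt.continuousAt.continuousWithinAt
  have hiv := intermediate_value_Icc hab hcont
  have hrmem : r ∈ Set.Icc (chiuPhi a) (chiuPhi b) := ⟨le_of_lt har, le_of_lt hbr⟩
  obtain ⟨M, hMmem, hMeq⟩ := hiv hrmem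
  have hM0 : 0 < M := lt_of_lt_of_le ha0 hMmem.1
  refine ⟨M, ⟨hM0, hMeq⟩, ?_⟩
  intro y ⟨hy0, hyr⟩
  exact chiu_strictMono.injOn (by simpa using hy0) (by simpa using hM0)
    (hyr.trans hMeq.symm)
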